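/- Let p, q, m, n be integers with |p| ≥ 2, |q| ≥ 2, m, n ≥ 1, mn = |pq|, m > |p|, and 2n − 1 ≥ |q|, and let a be a nonzero integer, with A the 2×2 real matrix with rows (p, 0) and (a, q). Then there exists k ≥ 1 and two distinct finite digit sequences (d₀, …, d_k) ≠ (d₀′, …, d_k′) with all d_i, d_i′ ∈ D such that ∑_{i=0}^{k} A^i d_i = ∑_{i=0}^{k} A^i d_i′; in particular #D_{A,k+1} < (mn)^{k+1}. -/

import Mathlib

open Matrix

/-- The matrix with rows `(p, 0)` and `(a, q)`. -/
noncomputable def matB (p q : ℤ) (a : ℝ) : Matrix (Fin 2) (Fin 2) ℝ :=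
  !![(p : ℝ), 0; a, (q : ℝ)]

/-- The product digit set `{0,…,m-1} × {0,…,n-1}` viewed inside `ℝ²`. -/
def digitSet (m n : ℤ) : Set (Fin 2 → ℝ) :=
  {v | ∃ i j : ℤ, 0 ≤ i ∧ i ≤ m - 1 ∧ 0 ≤ j ∧ j ≤ n - 1 ∧ v = ![(i : ℝ), (j : ℝ)]}

/-!
Expand `-a` in base `q` with balanced digits `yᵢ ∈ [-(n-1), n-1]`, which is possible because
`|q| ≤ 2n - 1`. The integer vectors `v₀ = (-p, y₀)`, `v₁ = (1, y₁)`, `vᵢ = (0, yᵢ)` then satisfy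
`∑ Aⁱ vᵢ = (0, a + ∑ qⁱ yᵢ) = 0`, because `A (1, 0) = (p, a)` and `Aⁱ (0, t) = (0, qⁱ t)`.
Since `|p| < m`, every `vᵢ` is a difference `dᵢ - dᵢ'` of two digits, so the digit strings `d ≠ d'`
have the same value and `(d₀, …, d_k) ↦ ∑ Aⁱ dᵢ` is not injective on `D^(k+1)`.
-/

open Finset

theorem Int.exists_balanced_digits (q N : ℤ) (hq : 2 ≤ |q|) (hN : |q| ≤ 2 * N + 1) (z : ℤ) :
    ∃ K : ℕ, ∃ y : ℕ → ℤ, (∀ i, |y i| ≤ N) ∧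
      ∀ k ≥ K, ∑ i ∈ Finset.range k, q ^ i * y i = z := by
  rw [Int.abs_eq_natAbs] at hq hN
  induction hz : z.natAbs using Nat.strong_induction_on generalizing z with
  | _ M ih =>
  by_cases hzN : |z| ≤ N
  · refine ⟨1, fun i => if i = 0 then z else 0, fun i => ?_, fun k hk => ?_⟩
    · dsimp only
      split_ifs
      exacts [hzN, by simp; omega]
    · rw [sum_eq_single_of_mem 0 (by simp; omega) (fun i _ hi => by simp [hi])]
      simp
  · set r := Int.bmod z q.natAbs
    have hq0 : 0 < q.natAbs := by omega
    have hr : |r| ≤ N := by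
      have := Int.le_bmod (x := z) hq0
      have := Int.bmod_le (x := z) hq0
      rw [abs_le]; constructor <;> omega
    obtain ⟨t, ht⟩ : q ∣ z - r := Int.natAbs_dvd.mp ⟨Int.bdiv z q.natAbs, by
      have := Int.bdiv_add_bmod z q.natAbs; omega⟩
    have ht_lt : t.natAbs < M := by
      have hqt : |q| * |t| ≤ |z| + N := by
        rw [← abs_mul, ← ht]; exact (abs_sub _ _).trans (by linarith)
      rw [Int.abs_eq_natAbs q] at hqt
      -- `|q| |t| ≤ |z| + N < 2 |z| ≤ |q| |z|`
      have : |t| < |z| := by nlinarith [abs_nonneg t]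
      rw [Int.abs_eq_natAbs, Int.abs_eq_natAbs] at this
      omega
    obtain ⟨K, y, hy, hsum⟩ := ih _ ht_lt t rfl
    refine ⟨K + 1, fun | 0 => r | i + 1 => y i, fun | 0 => hr | i + 1 => hy i, fun k hk => ?_⟩
    obtain ⟨k, rfl⟩ := Nat.exists_eq_add_of_le' (show 1 ≤ k by omega)
    rw [sum_range_succ']
    simp only [pow_succ', mul_assoc, ← mul_sum, hsum k (by omega), pow_zero, one_mul]
    linarith

theorem matB_mulVec (p q : ℤ) (a s t : ℝ) :
    matB p q a *ᵥ ![s, t] = ![p * s, a * s + q * t] := by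
  ext i; fin_cases i <;> simp [matB, mulVec, dotProduct]

theorem matB_pow_mulVec_fst_zero (p q : ℤ) (a t : ℝ) (i : ℕ) :
    (matB p q a ^ i) *ᵥ ![0, t] = ![0, (q : ℝ) ^ i * t] := by
  induction i with
  | zero => simp
  | succ i ih => rw [pow_succ', ← mulVec_mulVec, ih, matB_mulVec]; simp [pow_succ]; ring

theorem sum_matB_pow_mulVec_eq (p q : ℤ) (a : ℝ) (x y : ℕ → ℝ) (k : ℕ)
    (hx₀ : x 0 = -p) (hx₁ : x 1 = 1) (hx : ∀ i, x (i + 2) = 0) :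
    ∑ i ∈ range (k + 2), (matB p q a ^ i) *ᵥ ![x i, y i] =
      ![0, a + ∑ i ∈ range (k + 2), (q : ℝ) ^ i * y i] := by
  have hsplit : ∀ i, ![x i, y i] = ![x i, 0] + ![0, y i] := fun i => by simp
  have hx_sum : ∑ i ∈ range (k + 2), (matB p q a ^ i) *ᵥ ![x i, 0] = ![0, a] := by
    simp only [sum_range_succ', hx, zero_add, pow_one, pow_zero, one_mulVec, hx₀, hx₁,
      matB_mulVec]
    simp
  have hy_sum : ∑ i ∈ range (k + 2), (matB p q a ^ i) *ᵥ ![0, y i] =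
      ![0, ∑ i ∈ range (k + 2), (q : ℝ) ^ i * y i] := by
    simp only [matB_pow_mulVec_fst_zero]
    ext j; fin_cases j <;> simp [Finset.sum_apply]
  simp only [hsplit, mulVec_add, sum_add_distrib, hx_sum, hy_sum]
  simp

theorem exists_digitSet_sub_eq (m n i j : ℤ) (hi : |i| ≤ m - 1) (hj : |j| ≤ n - 1) :
    ∃ d ∈ digitSet m n, ∃ d' ∈ digitSet m n, d - d' = ![(i : ℝ), (j : ℝ)] := by
  rw [abs_le] at hi hj
  refine ⟨_, ⟨max i 0, max j 0, by omega, by omega, by omega, by omega, rfl⟩,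
    _, ⟨max (-i) 0, max (-j) 0, by omega, by omega, by omega, by omega, rfl⟩, ?_⟩
  ext k; fin_cases k <;> simp

theorem digitSet_eq_image (m n : ℤ) :
    digitSet m n =
      ((Ico 0 m ×ˢ Ico 0 n).image fun ij : ℤ × ℤ => ![(ij.1 : ℝ), (ij.2 : ℝ)] :) := by
  ext v
  simp only [digitSet, Set.mem_ofPred_eq, coe_image, coe_product, coe_Ico, Set.mem_image,
    Set.mem_prod, Set.mem_Ico, Prod.exists]
  constructor
  · rintro ⟨i, j, hi0, hi, hj0, hj, rfl⟩
    exact ⟨i, j, ⟨⟨hi0, by omega⟩, hj0, by omega⟩, rfl⟩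
  · rintro ⟨i, j, ⟨⟨hi0, hi⟩, hj0, hj⟩, rfl⟩
    exact ⟨i, j, hi0, by omega, hj0, by omega, rfl⟩

theorem digitSet_finite (m n : ℤ) : (digitSet m n).Finite := by
  rw [digitSet_eq_image]
  exact finite_toSet _

theorem ncard_digitSet (m n : ℤ) (hm : 0 ≤ m) (hn : 0 ≤ n) :
    (digitSet m n).ncard = (m * n).toNat := by
  have hinj : Function.Injective fun ij : ℤ × ℤ => ![(ij.1 : ℝ), (ij.2 : ℝ)] := by
    rintro ⟨i, j⟩ ⟨i', j'⟩ h
    have h0 := congrFun h 0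
    have h1 := congrFun h 1
    simp only [cons_val_zero, cons_val_one, Int.cast_inj] at h0 h1
    rw [h0, h1]
  rw [digitSet_eq_image, Set.ncard_coe_finset, card_image_of_injective _ hinj, card_product,
    Int.card_Ico, Int.card_Ico, sub_zero, sub_zero, Int.toNat_mul hm hn]

theorem ncard_setOf_sum_lt_pow_of_collision {V W : Type*} [AddCommMonoid W] {D : Set V}
    (hD : D.Finite) (f : ℕ → V → W) {K : ℕ} {d d' : ℕ → V} (hd : ∀ i < K, d i ∈ D)
    (hd' : ∀ i < K, d' i ∈ D) (hne : ∃ i < K, d i ≠ d' i)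
    (heq : ∑ i ∈ range K, f i (d i) = ∑ i ∈ range K, f i (d' i)) :
    {x | ∃ e : ℕ → V, (∀ i < K, e i ∈ D) ∧ x = ∑ i ∈ range K, f i (e i)}.ncard < D.ncard ^ K := by
  set P := Set.univ.pi fun _ : Fin K => D
  set F : (Fin K → V) → W := fun c => ∑ i : Fin K, f i (c i)
  have hP : P.Finite := Set.Finite.pi fun _ => hD
  have hsub : {x | ∃ e : ℕ → V, (∀ i < K, e i ∈ D) ∧ x = ∑ i ∈ range K, f i (e i)} ⊆ F '' P := by
    rintro _ ⟨e, he, rfl⟩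
    exact ⟨fun i => e i, fun i _ => he i i.isLt, Fin.sum_univ_eq_sum_range (fun i => f i (e i)) K⟩
  have hnotinj : ¬ Set.InjOn F P := by
    obtain ⟨i, hi, hdi⟩ := hne
    intro hinj
    have hF : F (fun i => d i) = F (fun i => d' i) := by
      simpa only [F, Fin.sum_univ_eq_sum_range (fun i => f i (d i)),
        Fin.sum_univ_eq_sum_range (fun i => f i (d' i))] using heq
    exact hdi (congrFun (hinj (fun i _ => hd i i.isLt) (fun i _ => hd' i i.isLt) hF) ⟨i, hi⟩)
  have hcard : P.ncard = D.ncard ^ K := by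
    rw [← Nat.card_coe_set_eq, Nat.card_congr (Equiv.Set.univPi _), Nat.card_pi]
    simp [Nat.card_coe_set_eq]
  calc _ ≤ (F '' P).ncard := Set.ncard_le_ncard hsub (hP.image F)
    _ < P.ncard := (Set.ncard_image_le hP).lt_of_ne
      fun h => hnotinj (Set.injOn_of_ncard_image_eq h hP)
    _ = D.ncard ^ K := hcard

theorem exists_matB_collision (p q m n a : ℤ) (hq : 2 ≤ |q|) (hm : 2 ≤ m) (hmp : |p| < m)
    (hnq : |q| ≤ 2 * n - 1) :
    ∃ k : ℕ, 1 ≤ k ∧ ∃ d d' : ℕ → (Fin 2 → ℝ),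
      (∀ i ≤ k, d i ∈ digitSet m n ∧ d' i ∈ digitSet m n) ∧ (∃ i ≤ k, d i ≠ d' i) ∧
      ∑ i ∈ range (k + 1), (matB p q (a : ℝ) ^ i) *ᵥ d i =
        ∑ i ∈ range (k + 1), (matB p q (a : ℝ) ^ i) *ᵥ d' i := by
  obtain ⟨K, y, hy, hsum⟩ := Int.exists_balanced_digits q (n - 1) hq (by linarith) (-a)
  let x : ℕ → ℤ := fun | 0 => -p | 1 => 1 | _ + 2 => 0
  have hx : ∀ i, |x i| ≤ m - 1 := by
    have := abs_nonneg p
    rintro (_ | _ | i) <;> simp [x] <;> omega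
  choose d hd d' hd' hdd' using fun i => exists_digitSet_sub_eq m n (x i) (y i) (hx i) (hy i)
  refine ⟨K + 1, by omega, d, d', fun i _ => ⟨hd i, hd' i⟩, ⟨1, by omega, fun h => ?_⟩, ?_⟩
  · simpa [x, h] using congrFun (hdd' 1) 0
  · rw [← sub_eq_zero, ← sum_sub_distrib]
    simp only [← mulVec_sub, hdd']
    rw [sum_matB_pow_mulVec_eq p q a (fun i => x i) (fun i => y i) K (by simp [x]) (by simp [x])
      (fun _ => by simp [x])]
    have hy_sum : ∑ i ∈ range (K + 2), (q : ℝ) ^ i * y i = -a := by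
      exact_mod_cast hsum (K + 2) (by omega)
    simp [hy_sum]

theorem stmt_19_general (p q m n a : ℤ) (hp : 2 ≤ |p|) (hq : 2 ≤ |q|) (hmp : |p| < m)
    (hnq : |q| ≤ 2 * n - 1) :
    ∃ k : ℕ, 1 ≤ k ∧
      (∃ d d' : ℕ → (Fin 2 → ℝ),
        (∀ i ≤ k, d i ∈ digitSet m n ∧ d' i ∈ digitSet m n) ∧
        (∃ i ≤ k, d i ≠ d' i) ∧
        ∑ i ∈ Finset.range (k + 1), (matB p q (a : ℝ) ^ i).mulVec (d i) =
          ∑ i ∈ Finset.range (k + 1), (matB p q (a : ℝ) ^ i).mulVec (d' i)) ∧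
      {x : Fin 2 → ℝ | ∃ d : ℕ → (Fin 2 → ℝ), (∀ i < k + 1, d i ∈ digitSet m n) ∧
          x = ∑ i ∈ Finset.range (k + 1), (matB p q (a : ℝ) ^ i).mulVec (d i)}.ncard <
        (m * n).toNat ^ (k + 1) := by
  obtain ⟨k, hk, d, d', hdd', hne, heq⟩ := exists_matB_collision p q m n a hq (by omega) hmp hnq
  refine ⟨k, hk, ⟨d, d', hdd', hne, heq⟩, ?_⟩
  have hm : 0 ≤ m := (abs_nonneg p).trans hmp.le
  have hn : 0 ≤ n := by linarith [abs_nonneg q]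
  rw [← ncard_digitSet m n hm hn]
  obtain ⟨i, hi, hdi⟩ := hne
  exact ncard_setOf_sum_lt_pow_of_collision (digitSet_finite m n)
    (fun i v => (matB p q a ^ i) *ᵥ v) (fun i hi => (hdd' i (Nat.lt_succ_iff.mp hi)).1)
    (fun i hi => (hdd' i (Nat.lt_succ_iff.mp hi)).2) ⟨i, Nat.lt_succ_of_le hi, hdi⟩ heq

theorem stmt_19 (p q m n a : ℤ) (hp : 2 ≤ |p|) (hq : 2 ≤ |q|)
    (hm : 1 ≤ m) (hn : 1 ≤ n) (hmn : m * n = |p * q|) (hmp : |p| < m)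
    (hnq : |q| ≤ 2 * n - 1) (ha : a ≠ 0) :
    ∃ k : ℕ, 1 ≤ k ∧
      (∃ d d' : ℕ → (Fin 2 → ℝ),
        (∀ i ≤ k, d i ∈ digitSet m n ∧ d' i ∈ digitSet m n) ∧
        (∃ i ≤ k, d i ≠ d' i) ∧
        ∑ i ∈ Finset.range (k + 1), (matB p q (a : ℝ) ^ i).mulVec (d i) =
          ∑ i ∈ Finset.range (k + 1), (matB p q (a : ℝ) ^ i).mulVec (d' i)) ∧
      {x : Fin 2 → ℝ | ∃ d : ℕ → (Fin 2 → ℝ), (∀ i < k + 1, d i ∈ digitSet m n) ∧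
          x = ∑ i ∈ Finset.range (k + 1), (matB p q (a : ℝ) ^ i).mulVec (d i)}.ncard <
        (m * n).toNat ^ (k + 1) :=
  stmt_19_general p q m n a hp hq hmp hnq
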